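/- arXiv:math/0401048 — 5 statements merged into one kernel-verified Lean document; each statement's English description precedes it below -/
import Mathlib

section
/- Let m ≥ 2 and let K be a normal subgroup of the free group F_m. For an integer n let W'(n) be the number of elements w ∈ K of reduced word length n. Then for all integers ℓ, ℓ' ≥ 1, W'(ℓ + ℓ' + 2) ≥ W'(ℓ) · W'(ℓ'): the counting function of reduced words in K is supermultiplicative up to a shift of 2. -/
/-!
For nonempty reduced words `u, v ∈ K`, normality puts `u * (a * v * a⁻¹)` in `K` for every letter
`a`. Since there are at least four letters, `a` can avoid the inverse of the last letter of `u`,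
the inverse of the first letter of `v` and the last letter of `v`; then the word `u a v a⁻¹` is
already reduced, so it has length `|u| + |v| + 2` and `(u, v)` is read off it by position. This
injects pairs of elements of `K` of lengths `ℓ, ℓ'` into elements of `K` of length `ℓ + ℓ' + 2`.
-/

/-- The free group on `m` generators. -/
abbrev FG (m : ℕ) := FreeGroup (Fin m)

/-- `W'_K(n)`: the number of elements of `K` of reduced word length `n`. -/
noncomputable def Wred (m : ℕ) (K : Subgroup (FG m)) (n : ℕ) : ℕ :=
  Nat.card {w : FG m // w ∈ K ∧ FreeGroup.norm w = n}

theorem List.eq_of_append_cons_append_singleton_eq {β : Type*} {L₁ L₂ M₁ M₂ : List β}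
    {a b c d : β} (h : L₁ ++ a :: (L₂ ++ [b]) = M₁ ++ c :: (M₂ ++ [d]))
    (hlen : L₁.length = M₁.length) : L₁ = M₁ ∧ L₂ = M₂ := by
  obtain ⟨rfl, htail⟩ := List.append_inj h hlen
  exact ⟨rfl, List.append_inj_left' (List.cons.inj htail).2 rfl⟩

namespace FreeGroup

variable {α : Type*} [DecidableEq α]

theorem exists_isReduced_append_cons_append_inv [Fintype α] (hα : 2 ≤ Fintype.card α)
    {L₁ L₂ : List (α × Bool)} (h₁ : IsReduced L₁) (h₂ : IsReduced L₂)
    (hL₁ : L₁ ≠ []) (hL₂ : L₂ ≠ []) :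
    ∃ a : α × Bool, IsReduced (L₁ ++ a :: (L₂ ++ [(a.1, !a.2)])) := by
  set x := L₁.getLast hL₁
  set y := L₂.head hL₂
  set z := L₂.getLast hL₂
  obtain ⟨a, -, ha⟩ := Finset.exists_mem_notMem_of_card_lt_card
    (s := {(x.1, !x.2), (y.1, !y.2), z}) (t := Finset.univ) <| by
      have : 4 ≤ Finset.univ.card (α := α × Bool) := by
        simp only [Finset.card_univ, Fintype.card_prod, Fintype.card_bool]
        omega
      exact Finset.card_le_three.trans_lt this
  simp only [Finset.mem_insert, Finset.mem_singleton, not_or] at ha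
  obtain ⟨hax, hay, haz⟩ := ha
  refine ⟨a, ?_⟩
  unfold IsReduced at h₁ h₂ ⊢
  simp only [List.isChain_append, List.isChain_cons, h₁, h₂,
    List.getLast?_eq_some_getLast hL₁, List.head?_append_of_ne_nil _ hL₂,
    List.head?_eq_some_head hL₂, List.getLast?_eq_some_getLast hL₂, Option.mem_def,
    Option.some.injEq, forall_eq', List.head?_nil, List.head?_cons, reduceCtorEq,
    Bool.not_eq_eq_eq_not, IsEmpty.forall_iff, implies_true, List.IsChain.nil, and_self, true_and]
  simp only [Prod.ext_iff] at hax hay haz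
  grind

theorem toWord_mul_conj_of_isReduced {u v : FreeGroup α} {a : α × Bool}
    (h : IsReduced (u.toWord ++ a :: (v.toWord ++ [(a.1, !a.2)]))) :
    (u * (mk [a] * v * (mk [a])⁻¹)).toWord = u.toWord ++ a :: (v.toWord ++ [(a.1, !a.2)]) := by
  rw [← h.reduce_eq, ← toWord_mk]
  congr 1
  conv_lhs => rw [← mk_toWord (x := u), ← mk_toWord (x := v)]
  simp [inv_mk, mul_mk, invRev]

theorem exists_toWord_mul_conj_eq [Fintype α] (hα : 2 ≤ Fintype.card α)
    {u v : FreeGroup α} (hu : u ≠ 1) (hv : v ≠ 1) :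
    ∃ a : α × Bool,
      (u * (mk [a] * v * (mk [a])⁻¹)).toWord = u.toWord ++ a :: (v.toWord ++ [(a.1, !a.2)]) :=
  (exists_isReduced_append_cons_append_inv hα isReduced_toWord isReduced_toWord
    (toWord_eq_nil_iff.not.mpr hu) (toWord_eq_nil_iff.not.mpr hv)).imp
    fun _ ↦ toWord_mul_conj_of_isReduced

def normSphere (K : Subgroup (FreeGroup α)) (n : ℕ) : Set (FreeGroup α) :=
  {x | x ∈ K ∧ x.norm = n}

theorem normSphere_finite [Finite α] (K : Subgroup (FreeGroup α)) (n : ℕ) :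
    (normSphere K n).Finite :=
  ((List.finite_length_eq (α × Bool) n).preimage toWord_injective.injOn).subset fun _ hx ↦ hx.2

theorem exists_injective_normSphere_prod [Fintype α] (hα : 2 ≤ Fintype.card α)
    (K : Subgroup (FreeGroup α)) [K.Normal] {ℓ ℓ' : ℕ} (hℓ : ℓ ≠ 0) (hℓ' : ℓ' ≠ 0) :
    ∃ f : normSphere K ℓ × normSphere K ℓ' → normSphere K (ℓ + ℓ' + 2), f.Injective := by
  have ne_one {n : ℕ} (hn : n ≠ 0) (x : normSphere K n) : (x : FreeGroup α) ≠ 1 :=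
    fun h ↦ hn (by rw [← x.2.2, h, norm_one])
  choose a ha using fun p : normSphere K ℓ × normSphere K ℓ' ↦
    exists_toWord_mul_conj_eq hα (ne_one hℓ p.1) (ne_one hℓ' p.2)
  refine ⟨fun p ↦ ⟨p.1 * (mk [a p] * p.2 * (mk [a p])⁻¹),
    K.mul_mem p.1.2.1 (‹K.Normal›.conj_mem _ p.2.2.1 _), ?_⟩, fun p q hpq ↦ ?_⟩
  · have hu : (p.1 : FreeGroup α).toWord.length = ℓ := p.1.2.2
    have hv : (p.2 : FreeGroup α).toWord.length = ℓ' := p.2.2.2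
    simp only [norm, ha p, List.length_append, List.length_cons, List.length_nil, hu, hv]
    omega
  · have hw := congrArg (fun x : normSphere K _ ↦ (x : FreeGroup α).toWord) hpq
    simp only [ha] at hw
    obtain ⟨hu, hv⟩ := List.eq_of_append_cons_append_singleton_eq hw (p.1.2.2.trans q.1.2.2.symm)
    exact Prod.ext (Subtype.ext (toWord_injective hu)) (Subtype.ext (toWord_injective hv))

end FreeGroup

/-- **Shifted supermultiplicativity of the cogrowth counting function.** For a
normal subgroup `K` of the free group `F_m` (`m ≥ 2`) one has
`W'(ℓ+ℓ'+2) ≥ W'(ℓ)·W'(ℓ')` for all `ℓ, ℓ' ≥ 1`. -/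
theorem Wred_supermultiplicative_shift
    (m : ℕ) (hm : 2 ≤ m) (K : Subgroup (FG m)) [K.Normal]
    (ℓ ℓ' : ℕ) (hℓ : 1 ≤ ℓ) (hℓ' : 1 ≤ ℓ') :
    Wred m K ℓ * Wred m K ℓ' ≤ Wred m K (ℓ + ℓ' + 2) := by
  obtain ⟨f, hf⟩ := FreeGroup.exists_injective_normSphere_prod (by simpa using hm) K
    (Nat.one_le_iff_ne_zero.mp hℓ) (Nat.one_le_iff_ne_zero.mp hℓ')
  have : Finite {w : FG m // w ∈ K ∧ FreeGroup.norm w = ℓ + ℓ' + 2} :=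
    (FreeGroup.normSphere_finite K _).to_subtype
  calc Wred m K ℓ * Wred m K ℓ'
      = Nat.card (FreeGroup.normSphere K ℓ × FreeGroup.normSphere K ℓ') := (Nat.card_prod _ _).symm
    _ ≤ Wred m K (ℓ + ℓ' + 2) := Nat.card_le_card_of_injective f hf
end

section
/- Let m ≥ 2, let K be a nontrivial normal subgroup of the free group F_m, let W'(n) be the number of elements of K of reduced word length n, and let η = limsup_{n→∞, n even} (1/n)·log_{2m-1} W'(n) be the cogrowth exponent of G = F_m/K. Then for every even integer ℓ ≥ 2 one has the exact (not merely asymptotic) bound W'(ℓ) ≤ (2m-1)^{ηℓ + 2}. -/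
open Filter

/-- The filter of even natural numbers tending to infinity. -/
def evenAtTop : Filter ℕ := Filter.atTop ⊓ Filter.principal {L | Even L}

/-! If `u, v ∈ K` are reduced words with `v ≠ 1` and the letter `s` cancels neither
with the end of `u`, nor with the start of `v`, nor (as `s⁻¹`) with the end of `v`, then the word
`u s v s⁻¹ ∈ K` is reduced; with at least four letters such an `s` exists, and `(u, v)` can be
read off from `u s v s⁻¹`. Hence `W'(a) W'(ℓ) ≤ W'(a + ℓ + 2)`, so
`W'(ℓ)^(k+1) ≤ W'(ℓ + k(ℓ+2))` and `log W'(ℓ) ≤ η (ℓ + 2)` (logarithms to base `2m-1`). This is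
the claim when `η ≤ 1`; when `η > 1` it follows from `log W'(ℓ) ≤ ℓ + 1`, which comes from the
count `2m(2m-1)^(n-1)` of reduced words of length `n`. -/

namespace FreeGroup

open Finset

variable {α : Type*}

theorem exists_isReduced_append_cons_append_inv_s11 [Fintype α] (hα : 2 ≤ Fintype.card α)
    {L M : List (α × Bool)} (hL : IsReduced L) (hM : IsReduced M) (hM₀ : M ≠ []) :
    ∃ s : α × Bool, IsReduced (L ++ s :: (M ++ [(s.1, !s.2)])) := by
  classical
  -- `x` is the last letter of `L`; the default value only matters when `L = []`.
  set x := L.getLast?.getD (M.head hM₀)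
  set y := M.head hM₀
  set z := M.getLast hM₀
  have hcard : #({(x.1, !x.2), (y.1, !y.2), z} : Finset (α × Bool)) <
      #(univ : Finset (α × Bool)) := by
    simp only [card_univ, Fintype.card_prod, Fintype.card_bool]
    exact (card_le_three).trans_lt (by omega)
  obtain ⟨s, -, hs⟩ := exists_mem_notMem_of_card_lt_card hcard
  simp only [mem_insert, mem_singleton, not_or, Prod.ext_iff, Bool.eq_not, not_and] at hs
  obtain ⟨hsx, hsy, hsz⟩ := hs
  refine ⟨s, List.IsChain.append hL (List.IsChain.cons ?_ ?_) ?_⟩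
  · exact hM.append (List.isChain_singleton _) fun a ha b hb => by
      rw [List.getLast?_eq_some_getLast hM₀, Option.mem_some_iff] at ha
      simp only [List.head?_cons, Option.mem_some_iff] at hb
      subst ha hb
      grind
  · intro b hb
    rw [List.head?_append_of_ne_nil _ hM₀, List.head?_eq_some_head hM₀, Option.mem_some_iff] at hb
    subst hb
    grind
  · intro a ha b hb
    simp only [List.head?_cons, Option.mem_some_iff] at hb
    subst hb
    have : x = a := by simp [x, Option.mem_def.1 ha]
    grind

theorem toWord_mul_mk_mul_inv_mk_of_isReduced [DecidableEq α] {u v : FreeGroup α}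
    {s : α × Bool} (h : IsReduced (u.toWord ++ s :: (v.toWord ++ [(s.1, !s.2)]))) :
    (u * mk [s] * v * (mk [s])⁻¹).toWord = u.toWord ++ s :: (v.toWord ++ [(s.1, !s.2)]) := by
  rw [← h.reduce_eq, ← toWord_mk, inv_mk, ← mk_toWord (x := u), ← mk_toWord (x := v)]
  simp [mul_mk, invRev]

theorem finite_setOf_norm_eq [Finite α] [DecidableEq α] (n : ℕ) :
    {w : FreeGroup α | norm w = n}.Finite :=
  (List.finite_length_eq (α × Bool) n).preimage toWord_injective.injOn

noncomputable def reducedWords (α : Type*) [Finite α] (n : ℕ) : Finset (List (α × Bool)) :=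
  ((List.finite_length_eq (α × Bool) n).inter_of_left {L | IsReduced L}).toFinset

@[simp]
theorem mem_reducedWords [Finite α] {n : ℕ} {L : List (α × Bool)} :
    L ∈ reducedWords α n ↔ L.length = n ∧ IsReduced L := by
  simp [reducedWords]

variable [Fintype α]

theorem card_reducedWords_one_le : #(reducedWords α 1) ≤ 2 * Fintype.card α := by
  classical
  calc #(reducedWords α 1) ≤ #((univ : Finset (α × Bool)).image fun a => [a]) := by
        refine card_le_card fun L hL => ?_
        obtain ⟨hlen, -⟩ := mem_reducedWords.1 hL
        obtain ⟨a, rfl⟩ := List.length_eq_one_iff.1 hlen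
        simp
    _ ≤ 2 * Fintype.card α := by
        simpa [mul_comm] using card_image_le (s := (univ : Finset (α × Bool)))

theorem card_reducedWords_add_two_le (n : ℕ) :
    #(reducedWords α (n + 2)) ≤ (2 * Fintype.card α - 1) * #(reducedWords α (n + 1)) := by
  classical
  refine card_le_mul_card_image_of_maps_to (f := List.tail) ?_ _ ?_
  · intro L hL
    obtain ⟨hlen, hred⟩ := mem_reducedWords.1 hL
    exact mem_reducedWords.2 ⟨by simp [hlen], hred.infix (List.tail_suffix L).isInfix⟩
  · intro M hM
    obtain ⟨b, M', rfl⟩ := List.exists_cons_of_length_eq_add_one (mem_reducedWords.1 hM).1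
    calc #{L ∈ reducedWords α (n + 2) | L.tail = b :: M'}
        ≤ #(((univ : Finset (α × Bool)).erase (b.1, !b.2)).image (· :: b :: M')) := by
          refine card_le_card fun L hL => ?_
          obtain ⟨hL, htail⟩ := mem_filter.1 hL
          obtain ⟨hlen, hred⟩ := mem_reducedWords.1 hL
          obtain ⟨a, L, rfl⟩ := List.exists_cons_of_length_eq_add_one hlen
          rw [List.tail_cons] at htail
          subst htail
          have hab := (isReduced_cons_cons.1 hred).1
          simp only [mem_image, mem_erase, mem_univ, and_true, List.cons.injEq, and_true]
          exact ⟨a, fun h => by simp [h] at hab, rfl⟩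
      _ ≤ 2 * Fintype.card α - 1 := by
          refine card_image_le.trans ?_
          simp [card_erase_of_mem, mul_comm]

theorem card_reducedWords_succ_le (n : ℕ) :
    #(reducedWords α (n + 1)) ≤ 2 * Fintype.card α * (2 * Fintype.card α - 1) ^ n := by
  induction n with
  | zero => simpa using card_reducedWords_one_le
  | succ n ih =>
    calc #(reducedWords α (n + 2))
        ≤ (2 * Fintype.card α - 1) * #(reducedWords α (n + 1)) := card_reducedWords_add_two_le n
      _ ≤ 2 * Fintype.card α * (2 * Fintype.card α - 1) ^ (n + 1) := by
          rw [pow_succ]; nlinarith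

end FreeGroup

open Finset FreeGroup Real

theorem pow_succ_le_of_mul_le {W : ℕ → ℕ} {ℓ c : ℕ} (h : ∀ a, W a * W ℓ ≤ W (a + ℓ + c))
    (k : ℕ) : W ℓ ^ (k + 1) ≤ W (ℓ + k * (ℓ + c)) := by
  induction k with
  | zero => simp
  | succ k ih =>
    calc W ℓ ^ (k + 2) = W ℓ ^ (k + 1) * W ℓ := pow_succ _ _
      _ ≤ W (ℓ + k * (ℓ + c)) * W ℓ := Nat.mul_le_mul_right _ ih
      _ ≤ W (ℓ + (k + 1) * (ℓ + c)) := by convert h _ using 2; ring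

theorem tendsto_add_mul_evenAtTop {ℓ : ℕ} (hℓ : Even ℓ) :
    Tendsto (fun k => ℓ + k * (ℓ + 2)) atTop evenAtTop :=
  tendsto_inf.2 ⟨tendsto_atTop_mono (fun k => by dsimp only [id]; nlinarith) tendsto_id,
    tendsto_principal.2 (.of_forall fun k => hℓ.add ((hℓ.add even_two).mul_left k))⟩

theorem logb_div_le_limsup_of_mul_le {q : ℝ} (hq : 1 < q) {W : ℕ → ℕ} {ℓ : ℕ} (hℓ : Even ℓ)
    (hℓ₀ : ℓ ≠ 0) (hW : 0 < W ℓ) (hmul : ∀ a, W a * W ℓ ≤ W (a + ℓ + 2))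
    (hbdd : IsBoundedUnder (· ≤ ·) evenAtTop fun n : ℕ => 1 / (n : ℝ) * logb q (W n)) :
    logb q (W ℓ) / (ℓ + 2) ≤ limsup (fun n : ℕ => 1 / (n : ℝ) * logb q (W n)) evenAtTop := by
  refine le_limsup_of_frequently_le ((tendsto_add_mul_evenAtTop hℓ).frequently
    (.of_forall fun k => ?_)) hbdd
  have hpow : (k + 1) * logb q (W ℓ) ≤ logb q (W (ℓ + k * (ℓ + 2))) := by
    have := pow_succ_le_of_mul_le hmul k
    rw [← Nat.cast_add_one, ← Real.logb_pow]
    exact logb_le_logb_of_le hq (by positivity) (by exact_mod_cast this)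
  have hL : 0 ≤ logb q (W ℓ) := logb_nonneg hq (by exact_mod_cast hW)
  -- Since `ℓ + k (ℓ + 2) ≤ (k + 1) (ℓ + 2)`, the bound holds termwise: no limit is needed.
  have hle : (↑(ℓ + k * (ℓ + 2)) : ℝ) ≤ (k + 1) * (ℓ + 2) := by push_cast; nlinarith
  calc logb q (W ℓ) / (ℓ + 2) = (k + 1) * logb q (W ℓ) / ((k + 1) * (ℓ + 2)) := by
        field_simp
    _ ≤ (k + 1) * logb q (W ℓ) / ↑(ℓ + k * (ℓ + 2)) :=
        div_le_div_of_nonneg_left (by positivity) (by positivity) hle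
    _ ≤ 1 / ↑(ℓ + k * (ℓ + 2)) * logb q (W (ℓ + k * (ℓ + 2))) := by
        rw [one_div_mul_eq_div]; gcongr

section Wred

variable {m : ℕ} (K : Subgroup (FG m))

theorem one_lt_two_mul_sub_one (hm : 2 ≤ m) : 1 < 2 * (m : ℝ) - 1 := by
  have : (2 : ℝ) ≤ m := by exact_mod_cast hm
  linarith

theorem Wred_le_card_reducedWords (n : ℕ) : Wred m K n ≤ #(reducedWords (Fin m) n) := by
  rw [Wred, ← Nat.card_eq_finsetCard]
  exact Nat.card_le_card_of_injective
    (fun w => ⟨w.1.toWord, mem_reducedWords.2 ⟨w.2.2, isReduced_toWord⟩⟩)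
    fun w w' h => Subtype.ext (toWord_injective (congrArg Subtype.val h))

theorem Wred_mul_le (hm : 2 ≤ m) [K.Normal] (a : ℕ) {b : ℕ} (hb : b ≠ 0) :
    Wred m K a * Wred m K b ≤ Wred m K (a + b + 2) := by
  have hne : ∀ v : FG m, FreeGroup.norm v = b → v.toWord ≠ [] := fun v hv => by
    rwa [Ne, toWord_eq_nil_iff, ← FreeGroup.norm_eq_zero, hv]
  choose s hs using fun (u v : FG m) (hv : FreeGroup.norm v = b) =>
    exists_isReduced_append_cons_append_inv_s11 (by simpa using hm) (isReduced_toWord (x := u))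
      isReduced_toWord (hne v hv)
  have hword (p : {w : FG m // w ∈ K ∧ FreeGroup.norm w = a} ×
      {w : FG m // w ∈ K ∧ FreeGroup.norm w = b}) :=
    toWord_mul_mk_mul_inv_mk_of_isReduced (hs p.1 p.2 p.2.2.2)
  let conj (p : {w : FG m // w ∈ K ∧ FreeGroup.norm w = a} ×
      {w : FG m // w ∈ K ∧ FreeGroup.norm w = b}) :
      {w : FG m // w ∈ K ∧ FreeGroup.norm w = a + b + 2} :=
    ⟨p.1 * mk [s p.1 p.2 p.2.2.2] * p.2 * (mk [s p.1 p.2 p.2.2.2])⁻¹, by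
      simpa only [mul_assoc] using K.mul_mem p.1.2.1 (‹K.Normal›.conj_mem _ p.2.2.1 _), by
      rw [FreeGroup.norm, hword]
      simp only [List.length_append, List.length_cons, List.length_nil]
      rw [← FreeGroup.norm, ← FreeGroup.norm, p.1.2.2, p.2.2.2]
      ring⟩
  have : Finite {w : FG m // w ∈ K ∧ FreeGroup.norm w = a + b + 2} :=
    ((finite_setOf_norm_eq _).subset fun _ hw => hw.2).to_subtype
  rw [Wred, Wred, Wred, ← Nat.card_prod]
  refine Nat.card_le_card_of_injective conj fun p q hpq => ?_
  have h := congrArg (fun w => toWord w.1) hpq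
  simp only [conj, hword] at h
  obtain ⟨h₁, h₂⟩ := List.append_inj h
    (by rw [← FreeGroup.norm, ← FreeGroup.norm, p.1.2.2, q.1.2.2])
  obtain ⟨h₂, -⟩ := List.append_inj (List.cons.inj h₂).2
    (by rw [← FreeGroup.norm, ← FreeGroup.norm, p.2.2.2, q.2.2.2])
  exact Prod.ext (Subtype.ext (toWord_injective h₁)) (Subtype.ext (toWord_injective h₂))

theorem Wred_succ_le (hm : 2 ≤ m) (n : ℕ) : Wred m K (n + 1) ≤ (2 * m - 1) ^ (n + 2) := by
  have h2m : 2 * m ≤ (2 * m - 1) ^ 2 := by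
    zify [show 1 ≤ 2 * m by omega]; nlinarith
  calc Wred m K (n + 1) ≤ #(reducedWords (Fin m) (n + 1)) := Wred_le_card_reducedWords K _
    _ ≤ 2 * m * (2 * m - 1) ^ n := by simpa using card_reducedWords_succ_le (α := Fin m) n
    _ ≤ (2 * m - 1) ^ (n + 2) := by rw [pow_add, mul_comm]; gcongr

theorem logb_Wred_succ_le (hm : 2 ≤ m) (n : ℕ) :
    logb (2 * (m : ℝ) - 1) (Wred m K (n + 1)) ≤ n + 2 := by
  rcases (Wred m K (n + 1)).eq_zero_or_pos with h | h
  · simp [h]; positivity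
  rw [logb_le_iff_le_rpow (one_lt_two_mul_sub_one hm) (by exact_mod_cast h)]
  have hcast : ((2 * m - 1 : ℕ) : ℝ) = 2 * m - 1 := by
    push_cast [Nat.cast_sub (by omega : 1 ≤ 2 * m)]; ring
  rw [show (n : ℝ) + 2 = (n + 2 : ℕ) by push_cast; ring, rpow_natCast, ← hcast]
  exact_mod_cast Wred_succ_le K hm n

theorem isBoundedUnder_one_div_mul_logb_Wred (hm : 2 ≤ m) (F : Filter ℕ) :
    IsBoundedUnder (· ≤ ·) F
      fun n : ℕ => 1 / (n : ℝ) * logb (2 * (m : ℝ) - 1) (Wred m K n) := by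
  refine isBoundedUnder_of ⟨2, fun n => ?_⟩
  rcases n with _ | n
  · simp
  calc 1 / ((n + 1 : ℕ) : ℝ) * logb (2 * (m : ℝ) - 1) (Wred m K (n + 1))
      ≤ 1 / ((n + 1 : ℕ) : ℝ) * (n + 2) := by gcongr; exact logb_Wred_succ_le K hm n
    _ ≤ 2 := by
      rw [one_div_mul_eq_div, div_le_iff₀ (by positivity)]; push_cast; linarith

end Wred

theorem Wred_le_of_cogrowth_general
    (m : ℕ) (hm : 2 ≤ m) (K : Subgroup (FG m)) [K.Normal]
    (η : ℝ)
    (hη : η = limsup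
      (fun n : ℕ => (1 / (n : ℝ)) * Real.logb (2 * (m : ℝ) - 1) (Wred m K n))
      evenAtTop)
    (ℓ : ℕ) (hℓeven : Even ℓ) (hℓ : 2 ≤ ℓ) :
    (Wred m K ℓ : ℝ) ≤ (2 * (m : ℝ) - 1) ^ (η * ℓ + 2) := by
  have hq := one_lt_two_mul_sub_one hm
  rcases (Wred m K ℓ).eq_zero_or_pos with h₀ | hpos
  · rw [h₀, Nat.cast_zero]; positivity
  rw [← logb_le_iff_le_rpow hq (by exact_mod_cast hpos)]
  have hη_ge : logb (2 * (m : ℝ) - 1) (Wred m K ℓ) / (ℓ + 2) ≤ η :=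
    hη ▸ logb_div_le_limsup_of_mul_le hq hℓeven (by omega) hpos
      (fun a => Wred_mul_le K hm a (by omega)) (isBoundedUnder_one_div_mul_logb_Wred K hm _)
  have hlen : logb (2 * (m : ℝ) - 1) (Wred m K ℓ) ≤ ℓ + 1 := by
    obtain ⟨n, rfl⟩ := Nat.exists_eq_add_of_le' (show 1 ≤ ℓ by omega)
    simpa [add_assoc, one_add_one_eq_two] using logb_Wred_succ_le K hm n
  rw [div_le_iff₀ (by positivity)] at hη_ge
  rcases le_or_gt η 1 with hη1 | hη1 <;> nlinarith

/-- **Exact cogrowth bound.** For a nontrivial normal subgroup `K` of the free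
group `F_m` (`m ≥ 2`) with cogrowth exponent
`η = limsup_{n→∞, n even} (1/n)·log_{2m-1} W'(n)`, one has the exact (not
merely asymptotic) bound `W'(ℓ) ≤ (2m-1)^{ηℓ+2}` for every even `ℓ ≥ 2`. -/
theorem Wred_le_of_cogrowth
    (m : ℕ) (hm : 2 ≤ m) (K : Subgroup (FG m)) [K.Normal] (hK : K ≠ ⊥)
    (η : ℝ)
    (hη : η = limsup
      (fun n : ℕ => (1 / (n : ℝ)) * Real.logb (2 * (m : ℝ) - 1) (Wred m K n))
      evenAtTop)
    (ℓ : ℕ) (hℓeven : Even ℓ) (hℓ : 2 ≤ ℓ) :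
    (Wred m K ℓ : ℝ) ≤ (2 * (m : ℝ) - 1) ^ (η * ℓ + 2) :=
  Wred_le_of_cogrowth_general m hm K η hη ℓ hℓeven hℓ
end

section
/- Let C be a real number with 0 < C < 1, α = 1/log(1/(1-C)), m ≥ 2 an integer and η ≥ 1/2 a real number. Let B ≥ 144/C² be a real number satisfying 4α·log(B/C) + 6 + (1/η)·log_{2m-1} B ≤ B. Then for every real B' ≥ B one has 4α·log(B'/C) + 6 + (1/η)·log_{2m-1} B' ≤ 2·√(B'·B). -/
/-!
Write `f x = 4α·log(x/C) + 6 + (1/η)·log_{2m-1} x`. Then `f B' = f B + K·log(B'/B)` with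
`K = 4α + 1/(η·log(2m-1)) ≤ 4/C + 2 ≤ 6/C`, using `α ≤ 1/C`, `η ≥ 1/2` and `log(2m-1) ≥ log 3 > 1`.
With `t = √(B'/B) ≥ 1` one has `log(B'/B) ≤ 2(t-1)`, and `2K ≤ 12/C ≤ B` since `B ≥ 144/C²`;
hence `f B' ≤ B + B(t-1) = B·t = √(B'B)`.
-/

open Real

namespace Real

lemma le_log_one_div_one_sub {C : ℝ} (hC : C < 1) : C ≤ log (1 / (1 - C)) := by
  have h1C : 0 < 1 - C := by linarith
  have := one_sub_inv_le_log_of_pos (one_div_pos.2 h1C)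
  rwa [one_div, inv_inv, sub_sub_cancel, ← one_div] at this

lemma one_div_log_one_div_one_sub_le {C : ℝ} (hC0 : 0 < C) (hC1 : C < 1) :
    1 / log (1 / (1 - C)) ≤ 1 / C :=
  one_div_le_one_div_of_le hC0 (le_log_one_div_one_sub hC1)

lemma one_le_log_of_three_le {x : ℝ} (hx : 3 ≤ x) : 1 ≤ log x := by
  rw [le_log_iff_exp_le (by linarith)]
  linarith [exp_one_lt_three]

lemma log_le_two_mul_sqrt_sub_one {x : ℝ} (hx : 0 < x) : log x ≤ 2 * (√x - 1) := by
  have := log_le_sub_one_of_pos (sqrt_pos.2 hx)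
  rw [log_sqrt hx.le] at this
  linarith

lemma sqrt_mul_eq_mul_sqrt_div {B B' : ℝ} (hB : 0 < B) : √(B' * B) = B * √(B' / B) := by
  rw [show B' * B = B' / B * B ^ 2 by field_simp, sqrt_mul' _ (sq_nonneg B), sqrt_sq hB.le,
    mul_comm]

end Real

lemma add_mul_log_div_le_sqrt_mul {a K B B' : ℝ} (hKB : 2 * K ≤ B) (ha : a ≤ B) (hB : 0 < B)
    (hBB' : B ≤ B') : a + K * log (B' / B) ≤ √(B' * B) := by
  set t := √(B' / B)
  have hx : 1 ≤ B' / B := (one_le_div hB).2 hBB'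
  have ht : 1 ≤ t := one_le_sqrt.2 hx
  have hlog : K * log (B' / B) ≤ B * (t - 1) := by
    rcases le_total 0 K with hK | hK
    · calc K * log (B' / B) ≤ K * (2 * (t - 1)) :=
            mul_le_mul_of_nonneg_left (log_le_two_mul_sqrt_sub_one (by linarith)) hK
        _ ≤ B * (t - 1) := by nlinarith
    · nlinarith [log_nonneg hx]
  rw [sqrt_mul_eq_mul_sqrt_div hB]
  linarith

lemma four_div_log_one_div_one_sub_add_le {C η L : ℝ} (hC0 : 0 < C) (hC1 : C < 1)
    (hη : 1 / 2 ≤ η) (hL : 1 ≤ L) : 4 * (1 / log (1 / (1 - C))) + 1 / η / L ≤ 6 / C := by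
  have hα := one_div_log_one_div_one_sub_le hC0 hC1
  have hη' : 1 / η ≤ 2 := by rw [div_le_iff₀ (by linarith)]; linarith
  have h2 : 1 / η / L ≤ 2 := (div_le_self (by positivity) hL).trans hη'
  have h2C : 2 ≤ 2 / C := by rw [le_div_iff₀ hC0]; linarith
  linarith [show 4 * (1 / C) + 2 / C = 6 / C by ring]

/-- **The iterative step inequality for the locality-of-cogrowth principle.**
For `0 < C < 1`, `α = 1/log(1/(1-C))`, `m ≥ 2`, `η ≥ 1/2` and `B ≥ 144/C²`
satisfying `4α·log(B/C) + 6 + (1/η)·log_{2m-1} B ≤ B`, every `B' ≥ B`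
satisfies `4α·log(B'/C) + 6 + (1/η)·log_{2m-1} B' ≤ 2√(B'B)`. -/
theorem iterative_step_inequality
    (C : ℝ) (hC0 : 0 < C) (hC1 : C < 1)
    (m : ℕ) (hm : 2 ≤ m) (η : ℝ) (hη : 1 / 2 ≤ η)
    (B : ℝ) (hB : 144 / C ^ 2 ≤ B)
    (hBineq : 4 * (1 / Real.log (1 / (1 - C))) * Real.log (B / C) + 6 +
        (1 / η) * Real.logb (2 * (m : ℝ) - 1) B ≤ B)
    (B' : ℝ) (hB' : B ≤ B') :
    4 * (1 / Real.log (1 / (1 - C))) * Real.log (B' / C) + 6 +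
        (1 / η) * Real.logb (2 * (m : ℝ) - 1) B' ≤
      2 * Real.sqrt (B' * B) := by
  have hB0 : 0 < B := lt_of_lt_of_le (by positivity) hB
  set K := 4 * (1 / log (1 / (1 - C))) + 1 / η / log (2 * (m : ℝ) - 1)
  have hsplit : 4 * (1 / log (1 / (1 - C))) * log (B' / C) + 6 +
      (1 / η) * logb (2 * (m : ℝ) - 1) B' =
      4 * (1 / log (1 / (1 - C))) * log (B / C) + 6 +
        (1 / η) * logb (2 * (m : ℝ) - 1) B + K * log (B' / B) := by
    simp only [K, logb, log_div (hB0.trans_le hB').ne' hC0.ne', log_div hB0.ne' hC0.ne',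
      log_div (hB0.trans_le hB').ne' hB0.ne']
    ring
  have hK : K ≤ 6 / C := four_div_log_one_div_one_sub_add_le hC0 hC1 hη
    (one_le_log_of_three_le (by linarith [show (2 : ℝ) ≤ m by exact_mod_cast hm]))
  have hKB : 2 * K ≤ B := by
    have : 2 * (6 / C) ≤ 144 / C ^ 2 := by
      rw [← mul_div_assoc, div_le_div_iff₀ hC0 (by positivity)]; nlinarith
    linarith
  rw [hsplit]
  linarith [add_mul_log_div_le_sqrt_mul hKB hBineq hB0 hB', sqrt_nonneg (B' * B)]
end

section
/- Let d ∈ [0, 1/2) and ℓ > 0 be real numbers and set ε = (1-2d)/4. Let n ≥ 1 be an integer, let d_1, …, d_n be real numbers with d_i ≥ -εℓ for all i, and let m_1 ≥ m_2 ≥ … ≥ m_n ≥ 1 be real numbers, with the convention m_{n+1} = 0. Let D and P be real numbers with D ≥ m_1 and P ≥ (1-2d)·ℓ·D + 2·Σ_{i=1}^n d_i·(m_i - m_{i+1}). Then P ≥ (1/2)·(1-2d)·ℓ·D + 2·d_n. -/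
lemma telescope_Icc (mm : ℕ → ℝ) (k : ℕ) :
    ∑ i ∈ Finset.Icc 1 k, (mm i - mm (i + 1)) = mm 1 - mm (k + 1) := by
  induction k with
  | zero => simp
  | succ k ih =>
      rw [Finset.sum_Icc_succ_top (by omega), ih]
      ring

/-- **The arithmetic rearrangement in the fulfilling estimate for van Kampen
diagrams of random groups** (proof of Proposition 5 of the paper). Let
`d ∈ [0,1/2)`, `ℓ > 0`, `ε = (1-2d)/4`, let `dd 1, …, dd n ≥ -εℓ`, let
`mm 1 ≥ … ≥ mm n ≥ 1` with the convention `mm (n+1) = 0`, and let `D ≥ mm 1`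
and `P ≥ (1-2d)ℓD + 2Σ dd i·(mm i - mm (i+1))`. Then
`P ≥ (1/2)(1-2d)ℓD + 2·dd n`. -/
theorem fulfilling_rearrangement
    (d ℓ : ℝ) (hd0 : 0 ≤ d) (hd : d < 1 / 2) (hℓ : 0 < ℓ)
    (n : ℕ) (hn : 1 ≤ n) (dd mm : ℕ → ℝ)
    (hdd : ∀ i, 1 ≤ i → i ≤ n → -((1 - 2 * d) / 4) * ℓ ≤ dd i)
    (hmono : ∀ i, 1 ≤ i → i < n → mm (i + 1) ≤ mm i)
    (hmn : 1 ≤ mm n) (hmtop : mm (n + 1) = 0)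
    (D P : ℝ) (hD : mm 1 ≤ D)
    (hP : (1 - 2 * d) * ℓ * D +
        2 * ∑ i ∈ Finset.Icc 1 n, dd i * (mm i - mm (i + 1)) ≤ P) :
    (1 / 2) * (1 - 2 * d) * ℓ * D + 2 * dd n ≤ P := by
  set E : ℝ := (1 - 2 * d) / 4 * ℓ with hE
  have hEpos : 0 < E := by
    apply mul_pos _ hℓ
    linarith
  -- split the sum at i = n
  have hsplit : ∑ i ∈ Finset.Icc 1 n, dd i * (mm i - mm (i + 1))
      = (∑ i ∈ Finset.Icc 1 (n - 1), dd i * (mm i - mm (i + 1))) + dd n * mm n := by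
    have h : n = (n - 1) + 1 := by omega
    rw [h, Finset.sum_Icc_succ_top (by omega)]
    rw [← h, hmtop]
    ring
  -- bound the partial sum from below
  have hbound : -E * (mm 1 - mm n)
      ≤ ∑ i ∈ Finset.Icc 1 (n - 1), dd i * (mm i - mm (i + 1)) := by
    have h1 : ∑ i ∈ Finset.Icc 1 (n - 1), (-E) * (mm i - mm (i + 1))
        ≤ ∑ i ∈ Finset.Icc 1 (n - 1), dd i * (mm i - mm (i + 1)) := by
      apply Finset.sum_le_sum
      intro i hi
      simp only [Finset.mem_Icc] at hi
      have hdiff : 0 ≤ mm i - mm (i + 1) := by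
        have := hmono i hi.1 (by omega)
        linarith
      have := hdd i hi.1 (by omega)
      apply mul_le_mul_of_nonneg_right _ hdiff
      simpa [hE] using this
    calc -E * (mm 1 - mm n)
        = ∑ i ∈ Finset.Icc 1 (n - 1), (-E) * (mm i - mm (i + 1)) := by
          rw [← Finset.mul_sum, telescope_Icc, Nat.sub_add_cancel hn]
      _ ≤ _ := h1
  have hdn : -E ≤ dd n := by simpa [hE] using hdd n hn le_rfl
  have hmm1' : ∀ k, k ≤ n → 1 ≤ k → mm k ≤ mm 1 := by
    intro k
    induction k with
    | zero => intro _ h; omega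
    | succ k ih =>
      intro hkn hk1
      rcases Nat.eq_zero_or_pos k with h0 | h0
      · simp [h0]
      · exact le_trans (hmono k h0 (by omega)) (ih (by omega) h0)
  have hmm1 : mm n ≤ mm 1 := hmm1' n le_rfl hn
  -- final arithmetic
  have hsum : -E * (mm 1 - mm n) + dd n * mm n
      ≤ ∑ i ∈ Finset.Icc 1 n, dd i * (mm i - mm (i + 1)) := by
    rw [hsplit]; linarith
  have h1 : -E * (mm n - 1) ≤ dd n * (mm n - 1) :=
    mul_le_mul_of_nonneg_right hdn (by linarith)
  have h2 : 0 ≤ E * (D - mm 1) := mul_nonneg hEpos.le (by linarith)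
  rw [show (1:ℝ) / 2 * (1 - 2 * d) * ℓ * D = 2 * (E * D) by rw [hE]; ring]
  rw [show (1 - 2 * d) * ℓ * D = 4 * (E * D) by rw [hE]; ring] at hP
  nlinarith [hP, hsum, h1, h2, hEpos]
end

section
/- Let n ≥ 1 be an integer and let β > 0, ℓ > 0, d, ε' ≥ 0 and ε'' be real numbers. Let m_1 ≥ m_2 ≥ … ≥ m_n ≥ 1 be real numbers, and let A_0 = 0, A_1, …, A_n and d'_0 = 0, d'_1, …, d'_n be real numbers such that for every a ∈ {1,…,n}: A_a - A_{a-1} ≥ m_a·( ℓ·(1-ε'') + (d'_a - d'_{a-1})/β ) and d'_a + a·d·ℓ + ε'·ℓ ≥ 0. Then A_n ≥ (Σ_{a=1}^n m_a)·ℓ·( 1 - ε'' - (d+ε')/β ) + (d'_n + n·d·ℓ)/β. -/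
/-!
Abel summation. Put `p a = d' a + a d ℓ + ε' ℓ`, which is nonnegative for `1 ≤ a ≤ n`. Since the
weights `m a` are nonincreasing, summing by parts gives
`∑ m a (p a - p (a-1)) ≥ m n p n - m 1 p 0 ≥ p n - (∑ m a) ε' ℓ`, while the linear part of `p`
contributes exactly `(∑ m a) d ℓ`. Summing the step hypotheses, the increments of `A` telescope
to `A n`, and dividing the bound on `∑ m a (d' a - d' (a-1))` by `β` gives the claim.
-/

open Finset

theorem apply_le_apply_of_succ_le {α : Type*} [Preorder α] {m : ℕ → α} {n : ℕ}
    (hm : ∀ a, 1 ≤ a → a < n → m (a + 1) ≤ m a) {a : ℕ} (ha : 1 ≤ a) (han : a ≤ n) :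
    m n ≤ m a := by
  induction n, han using Nat.le_induction with
  | base => exact le_rfl
  | succ k hak ih =>
    exact (hm k (ha.trans hak) k.lt_succ_self).trans
      (ih fun b hb hbk => hm b hb (hbk.trans k.lt_succ_self))

theorem sum_Icc_sub_pred {G : Type*} [AddCommGroup G] (f : ℕ → G) (n : ℕ) :
    ∑ a ∈ Icc 1 n, (f a - f (a - 1)) = f n - f 0 := by
  induction n with
  | zero => simp
  | succ k ih => rw [sum_Icc_succ_top (by omega), ih, Nat.add_sub_cancel]; abel

theorem sub_le_sum_Icc_mul_sub_pred {R : Type*} [CommRing R] [LinearOrder R]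
    [IsStrictOrderedRing R] {m p : ℕ → R} {n : ℕ} (hn : 1 ≤ n)
    (hm : ∀ a, 1 ≤ a → a < n → m (a + 1) ≤ m a) (hp : ∀ a, 1 ≤ a → a ≤ n → 0 ≤ p a) :
    m n * p n - m 1 * p 0 ≤ ∑ a ∈ Icc 1 n, m a * (p a - p (a - 1)) := by
  induction n, hn using Nat.le_induction with
  | base => simp [mul_sub]
  | succ k hk ih =>
    have hmk : m (k + 1) * p k ≤ m k * p k :=
      mul_le_mul_of_nonneg_right (hm k hk k.lt_succ_self) (hp k hk k.le_succ)
    have := ih (fun a ha hak => hm a ha (hak.trans k.lt_succ_self))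
      (fun a ha hak => hp a ha (hak.trans k.le_succ))
    rw [sum_Icc_succ_top (by omega), Nat.add_sub_cancel]
    linarith

theorem sub_sum_mul_le_sum_Icc_mul_sub_pred {R : Type*} [CommRing R] [LinearOrder R]
    [IsStrictOrderedRing R] {m d' : ℕ → R} {n : ℕ} {κ c : R} (hn : 1 ≤ n) (hc : 0 ≤ c)
    (hm : ∀ a, 1 ≤ a → a < n → m (a + 1) ≤ m a) (hmn : 1 ≤ m n) (hd'0 : d' 0 = 0)
    (hp : ∀ a, 1 ≤ a → a ≤ n → 0 ≤ d' a + a * κ + c) :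
    d' n + n * κ - (∑ a ∈ Icc 1 n, m a) * (κ + c) ≤ ∑ a ∈ Icc 1 n, m a * (d' a - d' (a - 1)) := by
  set p : ℕ → R := fun a => d' a + a * κ + c
  have hm_one : ∀ a ∈ Icc 1 n, 1 ≤ m a := fun a ha =>
    hmn.trans (apply_le_apply_of_succ_le hm (mem_Icc.1 ha).1 (mem_Icc.1 ha).2)
  have hshift : ∑ a ∈ Icc 1 n, m a * (p a - p (a - 1)) =
      ∑ a ∈ Icc 1 n, m a * (d' a - d' (a - 1)) + (∑ a ∈ Icc 1 n, m a) * κ := by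
    rw [sum_mul, ← sum_add_distrib]
    refine sum_congr rfl fun a ha => ?_
    simp only [p, Nat.cast_pred (mem_Icc.1 ha).1]
    ring
  have habel : m n * p n - m 1 * p 0 ≤ _ := sub_le_sum_Icc_mul_sub_pred hn hm hp
  have hpn : p n ≤ m n * p n := le_mul_of_one_le_left (hp n hn le_rfl) hmn
  have hm1 : m 1 ≤ ∑ a ∈ Icc 1 n, m a :=
    single_le_sum (fun a ha => zero_le_one.trans (hm_one a ha)) (mem_Icc.2 ⟨le_rfl, hn⟩)
  have hp0 : p 0 = c := by simp [p, hd'0]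
  rw [hshift, hp0] at habel
  simp only [p] at hpn
  linarith [mul_le_mul_of_nonneg_right hm1 hc]

theorem apparent_length_abel_inequality_general
    (n : ℕ) (hn : 1 ≤ n) (β ℓ d ε' ε'' : ℝ)
    (hβ : 0 < β) (hℓ : 0 < ℓ) (hε' : 0 ≤ ε')
    (mm A d' : ℕ → ℝ)
    (hmono : ∀ a, 1 ≤ a → a < n → mm (a + 1) ≤ mm a)
    (hmn : 1 ≤ mm n)
    (hA0 : A 0 = 0) (hd'0 : d' 0 = 0)
    (hstep : ∀ a, 1 ≤ a → a ≤ n →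
      mm a * (ℓ * (1 - ε'') + (d' a - d' (a - 1)) / β) ≤ A a - A (a - 1))
    (hprob : ∀ a, 1 ≤ a → a ≤ n → 0 ≤ d' a + a * d * ℓ + ε' * ℓ) :
    (∑ a ∈ Finset.Icc 1 n, mm a) * ℓ * (1 - ε'' - (d + ε') / β) +
        (d' n + n * d * ℓ) / β ≤ A n := by
  set S := ∑ a ∈ Icc 1 n, mm a
  have hincr := sub_sum_mul_le_sum_Icc_mul_sub_pred (κ := d * ℓ) hn (mul_nonneg hε' hℓ.le)
    hmono hmn hd'0 fun a ha han => by simpa only [mul_assoc] using hprob a ha han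
  calc S * ℓ * (1 - ε'' - (d + ε') / β) + (d' n + n * d * ℓ) / β
      = S * (ℓ * (1 - ε'')) + (d' n + n * (d * ℓ) - S * (d * ℓ + ε' * ℓ)) / β := by
        field_simp; ring
    _ ≤ S * (ℓ * (1 - ε'')) + (∑ a ∈ Icc 1 n, mm a * (d' a - d' (a - 1))) / β := by gcongr
    _ = ∑ a ∈ Icc 1 n, mm a * (ℓ * (1 - ε'') + (d' a - d' (a - 1)) / β) := by
        rw [sum_div, sum_mul, ← sum_add_distrib]
        exact sum_congr rfl fun a _ => by ring
    _ ≤ ∑ a ∈ Icc 1 n, (A a - A (a - 1)) :=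
        sum_le_sum fun a ha => hstep a (mem_Icc.1 ha).1 (mem_Icc.1 ha).2
    _ = A n := by rw [sum_Icc_sub_pred, hA0, sub_zero]

/-- **The Abel-summation inequality at the core of the apparent-length
estimate for random quotients of hyperbolic groups** (section 4.2 of the
paper). Let `n ≥ 1`, `β > 0`, `ℓ > 0`, `d, ε' ≥ 0`, `ε''` real, let
`mm 1 ≥ … ≥ mm n ≥ 1`, `A 0 = 0`, `d' 0 = 0`, and suppose that for all
`1 ≤ a ≤ n` one has `A a - A (a-1) ≥ mm a·(ℓ(1-ε'') + (d' a - d' (a-1))/β)`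
and `d' a + adℓ + ε'ℓ ≥ 0`. Then
`A n ≥ (Σ mm a)·ℓ·(1 - ε'' - (d+ε')/β) + (d' n + ndℓ)/β`. -/
theorem apparent_length_abel_inequality
    (n : ℕ) (hn : 1 ≤ n) (β ℓ d ε' ε'' : ℝ)
    (hβ : 0 < β) (hℓ : 0 < ℓ) (hd : 0 ≤ d) (hε' : 0 ≤ ε')
    (mm A d' : ℕ → ℝ)
    (hmono : ∀ a, 1 ≤ a → a < n → mm (a + 1) ≤ mm a)
    (hmn : 1 ≤ mm n)
    (hA0 : A 0 = 0) (hd'0 : d' 0 = 0)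
    (hstep : ∀ a, 1 ≤ a → a ≤ n →
      mm a * (ℓ * (1 - ε'') + (d' a - d' (a - 1)) / β) ≤ A a - A (a - 1))
    (hprob : ∀ a, 1 ≤ a → a ≤ n → 0 ≤ d' a + a * d * ℓ + ε' * ℓ) :
    (∑ a ∈ Finset.Icc 1 n, mm a) * ℓ * (1 - ε'' - (d + ε') / β) +
        (d' n + n * d * ℓ) / β ≤ A n :=
  apparent_length_abel_inequality_general n hn β ℓ d ε' ε'' hβ hℓ hε' mm A d' hmono hmn hA0 hd'0
    hstep hprob
end
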